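/- Let d ≥ 1 and let s₁, …, s_d be complex numbers with Re(s_j) > 1 for all j. Then ∫⋯∫_{{(x₁,…,x_d) : each x_j integral, |x₁|_f > |x₂|_f > ⋯ > |x_d|_f}} |x₁|_f^{s₁} ⋯ |x_d|_f^{s_d} dμ(x₁) ⋯ dμ(x_d) = ζ(s₁,…,s_d), where ζ(s₁,…,s_d) = ∑_{0 < n₁ < ⋯ < n_d} n₁^{-s₁} ⋯ n_d^{-s_d} is the multiple zeta function of depth d. -/

import Mathlib

open MeasureTheory

noncomputable section

instance (p : Nat.Primes) : Fact (p : ℕ).Prime := ⟨p.2⟩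

/-- The group in which finite ideles live: tuples of nonzero `p`-adic numbers. -/
abbrev IdeleComponents : Type := ∀ p : Nat.Primes, ℚ_[(p : ℕ)]ˣ

/-- The group of finite ideles of `ℚ`: tuples of nonzero `p`-adic numbers which are
`p`-adic units for all but finitely many `p` (the unit group of the restricted
product of the `ℚ_p` with respect to the `ℤ_p`). -/
def FiniteIdeles : Subgroup IdeleComponents where
  carrier := {x | {p : Nat.Primes | ‖((x p : ℚ_[(p : ℕ)]))‖ ≠ 1}.Finite}
  one_mem' := by
    simp
  mul_mem' := by
    intro x y hx hy
    refine (hx.union hy).subset ?_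
    intro p hp
    by_contra h
    simp only [Set.mem_union, Set.mem_setOf_eq, not_or, not_not] at h
    apply hp
    simp [Pi.mul_apply, Units.val_mul, norm_mul, h.1, h.2]
  inv_mem' := by
    intro x hx
    refine hx.subset ?_
    intro p hp
    simp only [Set.mem_setOf_eq, Pi.inv_apply] at hp ⊢
    rw [Units.val_inv_eq_inv_val, norm_inv] at hp
    intro h
    rw [h] at hp
    simp at hp

/-- The idele norm of a finite idele: the product `∏_p |x_p|_p` over all primes
(all but finitely many factors equal `1`). -/
def fnorm (x : FiniteIdeles) : ℝ :=
  ∏ᶠ p : Nat.Primes, ‖((x : IdeleComponents) p : ℚ_[(p : ℕ)])‖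

/-- A finite idele is integral if all of its components are `p`-adic integers. -/
def IsIntegralIdele (x : FiniteIdeles) : Prop :=
  ∀ p : Nat.Primes, ‖((x : IdeleComponents) p : ℚ_[(p : ℕ)])‖ ≤ 1

/-- The subset `Ẑ^×` of the finite ideles: all components are `p`-adic units. -/
def zHatUnits : Set FiniteIdeles :=
  {x | ∀ p : Nat.Primes, ‖((x : IdeleComponents) p : ℚ_[(p : ℕ)])‖ = 1}


/-!
Writing `v_p(x)` for the valuation of the `p`-component, `|x|_f = ∏_p p^(-v_p(x))`, and unique
factorisation (read off with `padicValRat`) shows that `|x|_f = 1` exactly on `Ẑ^×` and that `x` is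
integral exactly when `|x|_f = 1/n` for a positive integer `n`. Translating by an idele of norm
`1/n` (a product of uniformizers) carries `Ẑ^×` onto the level set `{|x|_f = 1/n}`, which therefore
has measure `1`. So the domain of integration is the disjoint union, over `0 < n₁ < ⋯ < n_d`, of
products of level sets of measure `1` on which the integrand is the constant `∏ n_j^(-s_j)`; the
multiple zeta series is dominated by a product of Riemann zeta series, which justifies exchanging
integral and sum.
-/

open Function

theorem padicValRat_prod_zpow (S : Finset Nat.Primes) (e : Nat.Primes → ℤ) (q : Nat.Primes) :
    padicValRat q (∏ p ∈ S, (p : ℚ) ^ e p) = if q ∈ S then e q else 0 := by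
  have hpow (p : Nat.Primes) : (p : ℚ) ^ e p ≠ 0 := zpow_ne_zero _ (by exact_mod_cast p.2.ne_zero)
  have hprime (p : Nat.Primes) : padicValRat q (p : ℚ) = if p = q then 1 else 0 := by
    rw [padicValRat.of_nat]
    split_ifs with h
    · simp [h]
    · simp [padicValNat_primes (p := q) (q := p) fun h' => h (Subtype.ext h').symm]
  induction S using Finset.induction_on with
  | empty => simp
  | insert a S ha ih =>
    rw [Finset.prod_insert ha,
      padicValRat.mul (hpow a) (Finset.prod_ne_zero_iff.2 fun p _ => hpow p), padicValRat.zpow,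
      hprime, ih]
    by_cases haq : a = q
    · subst haq
      simp [ha]
    · simp [haq, Ne.symm haq]

theorem padicValRat_finprod_zpow {e : Nat.Primes → ℤ} (he : (support e).Finite) (q : Nat.Primes) :
    padicValRat q (∏ᶠ p : Nat.Primes, (p : ℚ) ^ e p) = e q := by
  rw [finprod_eq_prod_of_mulSupport_subset _ (s := he.toFinset), padicValRat_prod_zpow]
  · split_ifs with h
    · rfl
    · simpa [eq_comm] using h
  · intro p hp
    contrapose! hp
    simp_all

namespace FiniteIdeles

def val (x : FiniteIdeles) (p : Nat.Primes) : ℤ :=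
  ((x : IdeleComponents) p : ℚ_[(p : ℕ)]).valuation

theorem norm_eq_zpow_neg_val (x : FiniteIdeles) (p : Nat.Primes) :
    ‖((x : IdeleComponents) p : ℚ_[(p : ℕ)])‖ = (p : ℝ) ^ (-val x p) :=
  Padic.norm_eq_zpow_neg_valuation (Units.ne_zero _)

theorem norm_eq_one_iff_val_eq_zero (x : FiniteIdeles) (p : Nat.Primes) :
    ‖((x : IdeleComponents) p : ℚ_[(p : ℕ)])‖ = 1 ↔ val x p = 0 := by
  rw [norm_eq_zpow_neg_val, zpow_eq_one_iff_right₀ (by positivity)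
    (by exact_mod_cast p.2.one_lt.ne'), neg_eq_zero]

theorem finite_support_val (x : FiniteIdeles) : (support (val x)).Finite :=
  x.2.subset fun p hp => by
    simpa [norm_eq_one_iff_val_eq_zero] using hp

theorem isIntegralIdele_iff (x : FiniteIdeles) : IsIntegralIdele x ↔ ∀ p, 0 ≤ val x p :=
  forall_congr' fun _ => Padic.norm_le_one_iff_val_nonneg _

theorem mem_zHatUnits_iff (x : FiniteIdeles) : x ∈ zHatUnits ↔ ∀ p, val x p = 0 :=
  forall_congr' (norm_eq_one_iff_val_eq_zero x)

theorem fnorm_pos (x : FiniteIdeles) : 0 < fnorm x :=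
  finprod_induction (0 < ·) one_pos (fun _ _ => mul_pos) fun _ => norm_pos_iff.2 (Units.ne_zero _)

theorem fnorm_one : fnorm 1 = 1 :=
  finprod_eq_one_of_forall_eq_one fun _ => norm_one

theorem fnorm_mul (x y : FiniteIdeles) : fnorm (x * y) = fnorm x * fnorm y := by
  rw [fnorm, fnorm, fnorm, ← finprod_mul_distrib x.2 y.2]
  simp

def invNorm (x : FiniteIdeles) : ℚ :=
  ∏ᶠ p : Nat.Primes, (p : ℚ) ^ val x p

theorem hasFiniteMulSupport_zpow_val (x : FiniteIdeles) :
    HasFiniteMulSupport fun p : Nat.Primes => (p : ℚ) ^ val x p :=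
  (finite_support_val x).subset fun p hp h => hp (by simp [h])

theorem fnorm_eq_inv_invNorm (x : FiniteIdeles) : fnorm x = ((invNorm x : ℚ) : ℝ)⁻¹ := by
  have hcast := map_finprod (Rat.castHom ℝ) (hasFiniteMulSupport_zpow_val x)
  simp only [Rat.coe_castHom, Rat.cast_zpow, Rat.cast_natCast] at hcast
  rw [invNorm, hcast, ← finprod_inv_distrib]
  refine finprod_congr fun p => ?_
  rw [norm_eq_zpow_neg_val, zpow_neg]

theorem padicValRat_invNorm (x : FiniteIdeles) (p : Nat.Primes) :
    padicValRat p (invNorm x) = val x p :=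
  padicValRat_finprod_zpow (finite_support_val x) p

theorem fnorm_eq_inv_natCast_iff (x : FiniteIdeles) (n : ℕ) :
    fnorm x = (n : ℝ)⁻¹ ↔ invNorm x = n := by
  rw [fnorm_eq_inv_invNorm, inv_inj, ← Rat.cast_natCast, Rat.cast_inj]

theorem fnorm_eq_one_iff (x : FiniteIdeles) : fnorm x = 1 ↔ x ∈ zHatUnits := by
  rw [mem_zHatUnits_iff]
  constructor
  · intro h p
    rw [← padicValRat_invNorm, (fnorm_eq_inv_natCast_iff x 1).1 (by simpa using h)]
    simp
  · intro h
    exact finprod_eq_one_of_forall_eq_one fun p => (norm_eq_one_iff_val_eq_zero x p).2 (h p)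

theorem exists_natCast_eq_invNorm_iff (x : FiniteIdeles) :
    (∃ n : ℕ, invNorm x = n) ↔ ∀ p, 0 ≤ val x p := by
  constructor
  · rintro ⟨n, hn⟩ p
    rw [← padicValRat_invNorm, hn, padicValRat.of_nat]
    exact Int.natCast_nonneg _
  · intro h
    refine ⟨∏ᶠ p : Nat.Primes, (p : ℕ) ^ (val x p).toNat, ?_⟩
    rw [Nat.cast_finprod', invNorm]
    refine finprod_congr fun p => ?_
    rw [Nat.cast_pow, ← zpow_natCast, Int.toNat_of_nonneg (h p)]

theorem isIntegralIdele_iff_exists_fnorm_eq (x : FiniteIdeles) :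
    IsIntegralIdele x ↔ ∃ n : ℕ, fnorm x = (n : ℝ)⁻¹ := by
  simp only [fnorm_eq_inv_natCast_iff, exists_natCast_eq_invNorm_iff, isIntegralIdele_iff]

def uniformizer (p : Nat.Primes) : FiniteIdeles :=
  ⟨Pi.mulSingle p (Units.mk0 (p : ℚ_[(p : ℕ)]) (by exact_mod_cast p.2.ne_zero)),
    (Set.finite_singleton p).subset fun q hq => by
      by_contra hqp
      simp [Pi.mulSingle_eq_of_ne hqp] at hq⟩

theorem fnorm_uniformizer (p : Nat.Primes) : fnorm (uniformizer p) = (p : ℝ)⁻¹ := by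
  rw [fnorm, finprod_eq_single _ p fun q hq => by simp [uniformizer, Pi.mulSingle_eq_of_ne hq]]
  simp [uniformizer]

theorem exists_fnorm_eq_inv_natCast {n : ℕ} (hn : n ≠ 0) :
    ∃ a : FiniteIdeles, fnorm a = (n : ℝ)⁻¹ := by
  induction n using induction_on_primes with
  | zero => exact absurd rfl hn
  | one => exact ⟨1, by simp [fnorm_one]⟩
  | prime_mul p m hp ih =>
    obtain ⟨a, ha⟩ := ih (right_ne_zero_of_mul hn)
    refine ⟨uniformizer (⟨p, hp⟩ : Nat.Primes) * a, ?_⟩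
    rw [fnorm_mul, ha, Nat.cast_mul, mul_inv]
    exact congrArg (· * _) (fnorm_uniformizer _)

section Measure

variable [MeasurableSpace FiniteIdeles] {μ : Measure FiniteIdeles}

theorem measure_fnorm_preimage_mul {a : FiniteIdeles} (ha : MeasurePreserving (a * ·) μ μ)
    (hnorm : Measurable fnorm) (t : ℝ) :
    μ (fnorm ⁻¹' {fnorm a * t}) = μ (fnorm ⁻¹' {t}) := by
  rw [← ha.measure_preimage (hnorm (measurableSet_singleton _)).nullMeasurableSet]
  congr 1
  ext x
  simp [fnorm_mul, (fnorm_pos a).ne']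

theorem measure_fnorm_preimage_inv_natCast
    (hinv : ∀ a : FiniteIdeles, MeasurePreserving (a * ·) μ μ) (hnorm : Measurable fnorm)
    (hZ : μ zHatUnits = 1) {n : ℕ} (hn : n ≠ 0) :
    μ (fnorm ⁻¹' {(n : ℝ)⁻¹}) = 1 := by
  obtain ⟨a, ha⟩ := exists_fnorm_eq_inv_natCast hn
  have hunits : fnorm ⁻¹' {1} = zHatUnits := Set.ext fnorm_eq_one_iff
  rw [← ha, ← mul_one (fnorm a), measure_fnorm_preimage_mul (hinv a) hnorm, hunits, hZ]

end Measure

end FiniteIdeles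

theorem setOf_strictAnti_inv_natCast_eq_iUnion_pi {α : Type*} {d : ℕ} (N : α → ℝ)
    (hN : ∀ a, 0 < N a) :
    {x : Fin d → α | (∀ j, ∃ n : ℕ, N (x j) = (n : ℝ)⁻¹) ∧ ∀ i j, i < j → N (x j) < N (x i)} =
      ⋃ g : {g : Fin d → ℕ // StrictMono g ∧ ∀ j, 0 < g j},
        Set.univ.pi fun j => N ⁻¹' {((g : Fin d → ℕ) j : ℝ)⁻¹} := by
  have hinv_lt {m n : ℕ} (hm : 0 < m) (hn : 0 < n) : (n : ℝ)⁻¹ < (m : ℝ)⁻¹ ↔ m < n := by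
    rw [inv_lt_inv₀ (by positivity) (by positivity), Nat.cast_lt]
  ext x
  simp only [Set.mem_ofPred_eq, Set.mem_iUnion, Set.mem_univ_pi, Set.mem_preimage,
    Set.mem_singleton_iff]
  constructor
  · rintro ⟨hlevel, hanti⟩
    choose g hg using hlevel
    have hpos (j : Fin d) : 0 < g j := by
      have := hN (x j)
      rw [hg j, inv_pos] at this
      exact_mod_cast this
    refine ⟨⟨g, fun i j hij => ?_, hpos⟩, hg⟩
    have := hanti i j hij
    rwa [hg, hg, hinv_lt (hpos i) (hpos j)] at this
  · rintro ⟨⟨g, hmono, hpos⟩, hg⟩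
    refine ⟨fun j => ⟨g j, hg j⟩, fun i j hij => ?_⟩
    rw [hg, hg, hinv_lt (hpos i) (hpos j)]
    exact hmono hij

theorem pairwise_disjoint_pi_preimage_inv_natCast {α ι : Type*} {d : ℕ} (N : α → ℝ)
    {g : ι → Fin d → ℕ} (hg : Injective g) :
    Pairwise (Disjoint on fun i => Set.univ.pi fun j => N ⁻¹' {(g i j : ℝ)⁻¹}) := by
  intro i i' hne
  refine Set.disjoint_left.2 fun x hx hx' => hne (hg (funext fun j => ?_))
  have := (Set.mem_univ_pi.1 hx j).symm.trans (Set.mem_univ_pi.1 hx' j)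
  exact_mod_cast inv_injective this

theorem setIntegral_iUnion_of_eqOn_const {X E ι : Type*} [MeasurableSpace X]
    [NormedAddCommGroup E] [NormedSpace ℝ E] [CompleteSpace E] [Countable ι] {μ : Measure X}
    {s : ι → Set X} {f : X → E} {c : ι → E} (hm : ∀ i, MeasurableSet (s i))
    (hd : Pairwise (Disjoint on s))
    (hμ : ∀ i, μ (s i) ≠ ⊤) (hf : ∀ i, Set.EqOn f (fun _ => c i) (s i))
    (hc : Summable fun i => μ.real (s i) * ‖c i‖) :
    ∫ x in ⋃ i, s i, f x ∂μ = ∑' i, μ.real (s i) • c i := by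
  have hint (i : ι) : IntegrableOn f (s i) μ :=
    (integrableOn_const (hμ i)).congr_fun (hf i).symm (hm i)
  have hnorm (i : ι) : ∫ x in s i, ‖f x‖ ∂μ = μ.real (s i) * ‖c i‖ := by
    rw [setIntegral_congr_fun (hm i) fun x hx => congrArg norm (hf i hx), setIntegral_const,
      smul_eq_mul]
  rw [integral_iUnion hm hd (integrableOn_iUnion_of_summable_integral_norm hint
    (by simpa only [hnorm] using hc))]
  exact tsum_congr fun i => by rw [setIntegral_congr_fun (hm i) (hf i), setIntegral_const]

theorem summable_fin_pi_prod {β : Type*} {d : ℕ} {f : Fin d → β → ℝ} (hf0 : ∀ j b, 0 ≤ f j b)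
    (hf : ∀ j, Summable (f j)) : Summable fun g : Fin d → β => ∏ j, f j (g j) := by
  induction d with
  | zero => exact .of_finite
  | succ d ih =>
    rw [← (Fin.consEquiv fun _ => β).summable_iff]
    refine ((hf 0).mul_of_nonneg (ih (fun j => hf0 j.succ) fun j => hf j.succ) (hf0 0)
      fun t => Finset.prod_nonneg fun j _ => hf0 j.succ (t j)).congr fun p => ?_
    simp [Fin.consEquiv, Fin.prod_univ_succ]

theorem summable_norm_natCast_cpow_neg {s : ℂ} (hs : 1 < s.re) :
    Summable fun n : ℕ => ‖(n : ℂ) ^ (-s)‖ :=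
  summable_norm_iff.2 <| by
    simpa [Complex.cpow_neg] using Complex.summable_one_div_nat_cpow.2 hs

theorem summable_norm_multipleZeta {d : ℕ} {s : Fin d → ℂ} (hs : ∀ j, 1 < (s j).re) :
    Summable fun g : {g : Fin d → ℕ // StrictMono g ∧ ∀ j, 0 < g j} =>
      ‖∏ j, ((g : Fin d → ℕ) j : ℂ) ^ (-(s j))‖ := by
  have := summable_fin_pi_prod (fun _ _ => norm_nonneg _)
    fun j => summable_norm_natCast_cpow_neg (hs j)
  simp only [norm_prod]
  exact this.comp_injective Subtype.val_injective

theorem Complex.ofReal_inv_natCast_cpow (n : ℕ) (s : ℂ) :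
    (((n : ℝ)⁻¹ : ℝ) : ℂ) ^ s = (n : ℂ) ^ (-s) := by
  rw [ofReal_inv, ofReal_natCast, inv_cpow _ _ (by simp [Real.pi_ne_zero.symm]), cpow_neg]

theorem adelic_multiple_zeta_general [MeasurableSpace FiniteIdeles]
    (μ : Measure FiniteIdeles) [SigmaFinite μ]
    (hinv : ∀ a : FiniteIdeles, MeasurePreserving (fun x => a * x) μ μ)
    (hnorm : Measurable fnorm)
    (hZ : μ zHatUnits = 1)
    (d : ℕ) (s : Fin d → ℂ) (hs : ∀ j, 1 < (s j).re) :
    ∫ x in {x : Fin d → FiniteIdeles |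
        (∀ j, IsIntegralIdele (x j)) ∧ ∀ i j, i < j → fnorm (x j) < fnorm (x i)},
      ∏ j, (fnorm (x j) : ℂ) ^ (s j) ∂(Measure.pi fun _ => μ)
      = ∑' n : {g : Fin d → ℕ // StrictMono g ∧ ∀ j, 0 < g j},
          ∏ j, ((n : Fin d → ℕ) j : ℂ) ^ (-(s j)) := by
  set T := fun g : {g : Fin d → ℕ // StrictMono g ∧ ∀ j, 0 < g j} =>
    Set.univ.pi fun j => fnorm ⁻¹' {((g : Fin d → ℕ) j : ℝ)⁻¹}
  have hdomain : {x : Fin d → FiniteIdeles |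
      (∀ j, IsIntegralIdele (x j)) ∧ ∀ i j, i < j → fnorm (x j) < fnorm (x i)} = ⋃ g, T g := by
    simp_rw [FiniteIdeles.isIntegralIdele_iff_exists_fnorm_eq]
    exact setOf_strictAnti_inv_natCast_eq_iUnion_pi fnorm FiniteIdeles.fnorm_pos
  have hT (g) : (Measure.pi fun _ => μ) (T g) = 1 := by
    rw [Measure.pi_pi]
    exact Finset.prod_eq_one fun j _ =>
      FiniteIdeles.measure_fnorm_preimage_inv_natCast hinv hnorm hZ (g.2.2 j).ne'
  have hconst (g : {g : Fin d → ℕ // StrictMono g ∧ ∀ j, 0 < g j}) :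
      Set.EqOn (fun x => ∏ j, (fnorm (x j) : ℂ) ^ (s j))
      (fun _ => ∏ j, ((g : Fin d → ℕ) j : ℂ) ^ (-(s j))) (T g) := fun x hx =>
    Finset.prod_congr rfl fun j _ => by
      rw [Set.mem_univ_pi.1 hx j, Complex.ofReal_inv_natCast_cpow]
  have hTreal (g) : (Measure.pi fun _ => μ).real (T g) = 1 := by
    rw [measureReal_def, hT, ENNReal.toReal_one]
  rw [hdomain, setIntegral_iUnion_of_eqOn_const (s := T)
    (fun g => .univ_pi fun j => hnorm (measurableSet_singleton _))
    (pairwise_disjoint_pi_preimage_inv_natCast fnorm Subtype.val_injective)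
    (fun g => (hT g).trans_ne ENNReal.one_ne_top) hconst
    (by simpa only [hTreal, one_mul] using summable_norm_multipleZeta hs)]
  simp only [hTreal, one_smul]

/-- Let `μ` be a translation-invariant measure on the finite ideles
`𝔸_f^×` of `ℚ` with `μ(Ẑ^×) = 1` (for which `Ẑ^×` is measurable and the idele norm
`|·|_f` is measurable, as holds for any Borel measure on the idele topology).  For
`d ≥ 1` and complex `s₁, …, s_d` with real parts `> 1`, the `d`-fold iterated adelic
integral over tuples of integral ideles with `|x₁|_f > ⋯ > |x_d|_f` of
`∏ |x_j|_f^{s_j}` equals the multiple zeta function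
`ζ(s₁,…,s_d) = ∑_{0 < n₁ < ⋯ < n_d} n₁^{-s₁} ⋯ n_d^{-s_d}` of depth `d`. -/
theorem adelic_multiple_zeta [MeasurableSpace FiniteIdeles]
    (μ : Measure FiniteIdeles) [SigmaFinite μ]
    (hinv : ∀ a : FiniteIdeles, MeasurePreserving (fun x => a * x) μ μ)
    (hnorm : Measurable fnorm) (hZmeas : MeasurableSet zHatUnits)
    (hZ : μ zHatUnits = 1)
    (d : ℕ) (hd : 1 ≤ d) (s : Fin d → ℂ) (hs : ∀ j, 1 < (s j).re) :
    ∫ x in {x : Fin d → FiniteIdeles |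
        (∀ j, IsIntegralIdele (x j)) ∧ ∀ i j, i < j → fnorm (x j) < fnorm (x i)},
      ∏ j, (fnorm (x j) : ℂ) ^ (s j) ∂(Measure.pi fun _ => μ)
      = ∑' n : {g : Fin d → ℕ // StrictMono g ∧ ∀ j, 0 < g j},
          ∏ j, ((n : Fin d → ℕ) j : ℂ) ^ (-(s j)) :=
  adelic_multiple_zeta_general μ hinv hnorm hZ d s hs
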